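/- arXiv:2006.14369 — 2 statements merged into one kernel-verified Lean document; each statement's English description precedes it below -/
import Mathlib

section
/- Let M be a compact metric space, φ a continuous flow on M, and H ⊆ M a compact invariant set. Then H has the strong finite pseudo-orbit tracing property (SFPOTP) if and only if for every ε > 0 and every T > 0 there exists δ > 0 such that every finite (δ,T)-chain of H is strongly ε-traced by some point of M. -/
/-- Partial time sums of a bi-infinite chain: `S 0 = 0`, `S i = t 0 + ⋯ + t (i-1)` for `i > 0`,
and `S i = -(t (-1) + ⋯ + t i)` for `i < 0`. -/
noncomputable def chainS (t : ℤ → ℝ) (i : ℤ) : ℝ :=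
  if 0 ≤ i then ∑ j ∈ Finset.range i.toNat, t (j : ℤ)
  else -∑ j ∈ Finset.range (-i).toNat, t (-((j : ℤ) + 1))

/-- Partial time sums of a finite chain: `S 0 = 0`, `S i = t 0 + ⋯ + t (i-1)`. -/
noncomputable def finChainS (t : ℕ → ℝ) (i : ℕ) : ℝ := ∑ j ∈ Finset.range i, t j

/-- `g` is a reparametrization: continuous, strictly increasing, `g 0 = 0`. -/
def IsRep (g : ℝ → ℝ) : Prop := Continuous g ∧ StrictMono g ∧ g 0 = 0

/-- `g` is a surjective reparametrization (the class `Rep*`). -/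
def IsRepStar (g : ℝ → ℝ) : Prop := IsRep g ∧ Function.Surjective g

/-- The class `Rep(ε)`: surjective reparametrizations whose difference quotients are
ε-close to 1. -/
def IsRepEps (ε : ℝ) (g : ℝ → ℝ) : Prop :=
  IsRepStar g ∧ ∀ s t : ℝ, s ≠ t → |(g s - g t) / (s - t) - 1| ≤ ε

variable {M : Type*} [MetricSpace M]

/-- `{x i ; t i}_{i ∈ ℤ}` is a (bi-infinite) `(δ,T)`-chain of `H` for the flow `φ`. -/
def IsChainDT (φ : ℝ → M → M) (H : Set M) (δ T : ℝ) (x : ℤ → M) (t : ℤ → ℝ) : Prop :=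
  (∀ i, x i ∈ H) ∧ (∀ i, T ≤ t i) ∧ ∀ i, dist (φ (t i) (x i)) (x (i + 1)) ≤ δ

/-- `{x i ; t i}_{i = 0}^{k}` is a finite `(δ,T)`-chain of `H` for the flow `φ`. -/
def IsFinChainDT (φ : ℝ → M → M) (H : Set M) (δ T : ℝ) (k : ℕ) (x : ℕ → M) (t : ℕ → ℝ) :
    Prop :=
  (∀ i ≤ k, x i ∈ H) ∧ (∀ i ≤ k, T ≤ t i) ∧ ∀ i < k, dist (φ (t i) (x i)) (x (i + 1)) ≤ δ

/-- The chain trajectory `x₀ * s = φ (s - S i) (x i)` (for `S i ≤ s < S (i+1)`) of a bi-infinite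
chain is ε-close, for all real times `s`, to the `g`-reparametrized orbit of `z`. -/
def TracedVia (φ : ℝ → M → M) (ε : ℝ) (x : ℤ → M) (t : ℤ → ℝ) (g : ℝ → ℝ) (z : M) : Prop :=
  ∀ i : ℤ, ∀ s : ℝ, chainS t i ≤ s → s < chainS t (i + 1) →
    dist (φ (s - chainS t i) (x i)) (φ (g s) z) ≤ ε

/-- The chain trajectory of a finite chain is ε-close, for all times `s ∈ [0, S (k+1)]`,
to the `g`-reparametrized orbit of `z`. -/
def FinTracedVia (φ : ℝ → M → M) (ε : ℝ) (k : ℕ) (x : ℕ → M) (t : ℕ → ℝ)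
    (g : ℝ → ℝ) (z : M) : Prop :=
  (∀ i ≤ k, ∀ s : ℝ, finChainS t i ≤ s → s < finChainS t (i + 1) →
    dist (φ (s - finChainS t i) (x i)) (φ (g s) z) ≤ ε) ∧
  dist (φ (t k) (x k)) (φ (g (finChainS t (k + 1))) z) ≤ ε

/-- Weak pseudo-orbit tracing property. -/
def WPOTP (φ : ℝ → M → M) (H : Set M) : Prop :=
  ∀ ε > (0 : ℝ), ∃ δ > (0 : ℝ), ∃ T > (0 : ℝ), ∀ x t, IsChainDT φ H δ T x t →
    ∃ z : M, ∃ g : ℝ → ℝ, IsRep g ∧ TracedVia φ ε x t g z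

/-- Normal pseudo-orbit tracing property. -/
def NPOTP (φ : ℝ → M → M) (H : Set M) : Prop :=
  ∀ ε > (0 : ℝ), ∃ δ > (0 : ℝ), ∃ T > (0 : ℝ), ∀ x t, IsChainDT φ H δ T x t →
    ∃ z : M, ∃ g : ℝ → ℝ, IsRepStar g ∧ TracedVia φ ε x t g z

/-- Strong pseudo-orbit tracing property. -/
def SPOTP (φ : ℝ → M → M) (H : Set M) : Prop :=
  ∀ ε > (0 : ℝ), ∃ δ > (0 : ℝ), ∃ T > (0 : ℝ), ∀ x t, IsChainDT φ H δ T x t →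
    ∃ z : M, ∃ g : ℝ → ℝ, IsRepEps ε g ∧ TracedVia φ ε x t g z

/-- Finite pseudo-orbit tracing property. -/
def FPOTP (φ : ℝ → M → M) (H : Set M) : Prop :=
  ∀ ε > (0 : ℝ), ∃ δ > (0 : ℝ), ∃ T > (0 : ℝ), ∀ k x t, IsFinChainDT φ H δ T k x t →
    ∃ z : M, ∃ g : ℝ → ℝ, IsRep g ∧ FinTracedVia φ ε k x t g z

/-- Strong finite pseudo-orbit tracing property. -/
def SFPOTP (φ : ℝ → M → M) (H : Set M) : Prop :=
  ∀ ε > (0 : ℝ), ∃ δ > (0 : ℝ), ∃ T > (0 : ℝ), ∀ k x t, IsFinChainDT φ H δ T k x t →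
    ∃ z : M, ∃ g : ℝ → ℝ, IsRepEps ε g ∧ FinTracedVia φ ε k x t g z

/-!
Given `ε` and `T`, take `δ₀, T₀` from SFPOTP for `ε / 2`. A window of length `T₀` of the chain
trajectory of a `(δ, T)`-chain contains at most `⌈T₀ / T⌉` breakpoints, so by uniform continuity
of the flow on `[0, T₀] × M` the trajectory stays within `min δ₀ (ε / 2)` of the true orbit through
the start of the window once `δ` is small. Sampling the trajectory at the times `j T₀` therefore
gives a `(δ₀, T₀)`-chain, and a point `ε / 2`-tracing it `ε`-traces the original chain. The converse
is the case `T = 1`.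
-/
open Set

section FinChainS

variable {t : ℕ → ℝ}

lemma finChainS_zero (t : ℕ → ℝ) : finChainS t 0 = 0 := Finset.sum_range_zero t

lemma finChainS_succ (t : ℕ → ℝ) (i : ℕ) : finChainS t (i + 1) = finChainS t i + t i :=
  Finset.sum_range_succ t i

lemma finChainS_const (c : ℝ) (j : ℕ) : finChainS (fun _ => c) j = j * c := by
  simp [finChainS]

lemma finChainS_mono {n : ℕ} (ht : ∀ j < n, 0 ≤ t j) {i j : ℕ} (hij : i ≤ j) (hjn : j ≤ n) :
    finChainS t i ≤ finChainS t j :=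
  Finset.sum_le_sum_of_subset_of_nonneg (Finset.range_mono hij) fun l hl _ =>
    ht l ((Finset.mem_range.1 hl).trans_le hjn)

lemma finChainS_le_finChainS {t' : ℕ → ℝ} (h : t ≤ t') (i : ℕ) :
    finChainS t i ≤ finChainS t' i :=
  Finset.sum_le_sum fun j _ => h j

lemma finChainS_add_mul_le {T : ℝ} {i n : ℕ} (ht : ∀ j < i + n, T ≤ t j) :
    finChainS t i + n * T ≤ finChainS t (i + n) := by
  induction n with
  | zero => simp
  | succ n ih =>
    rw [← add_assoc, finChainS_succ]
    push_cast
    linarith [ih fun j hj => ht j (by omega), ht (i + n) (by omega)]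

lemma finChainS_nonneg {i : ℕ} (ht : ∀ j < i, 0 ≤ t j) : 0 ≤ finChainS t i :=
  Finset.sum_nonneg fun j hj => ht j (Finset.mem_range.1 hj)

lemma sub_le_ceil_div_of_finChainS {T T₀ a σ : ℝ} {K p q : ℕ} (hT : 0 < T)
    (ht : ∀ j ≤ K, T ≤ t j) (hqK : q ≤ K) (ha : a < finChainS t (p + 1))
    (hσ : finChainS t q ≤ σ) (hσa : σ ≤ a + T₀) : q - p ≤ ⌈T₀ / T⌉₊ := by
  set N := ⌈T₀ / T⌉₊
  by_contra! hN
  have hNT : T₀ ≤ N * T := (div_le_iff₀ hT).1 (Nat.le_ceil _)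
  have hsum := finChainS_add_mul_le (t := t) (i := p + 1) (n := N) fun j hj => ht j (by omega)
  have hmono := finChainS_mono (t := t) (n := q) (fun j hj => hT.le.trans (ht j (by omega)))
    (show p + 1 + N ≤ q by omega) le_rfl
  linarith

lemma finChainS_update_of_le (k : ℕ) (v : ℝ) {i : ℕ} (hi : i ≤ k) :
    finChainS (Function.update t k v) i = finChainS t i :=
  Finset.sum_congr rfl fun j hj =>
    Function.update_of_ne (by have := Finset.mem_range.1 hj; omega) v t

lemma finChainS_update_succ (k : ℕ) (v : ℝ) :
    finChainS (Function.update t k v) (k + 1) = finChainS t k + v := by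
  rw [finChainS_succ, finChainS_update_of_le k v le_rfl, Function.update_self]

end FinChainS

open Classical in
noncomputable def segmentIndex (t : ℕ → ℝ) (K : ℕ) (s : ℝ) : ℕ :=
  Nat.findGreatest (fun i => finChainS t i ≤ s) K

/-- The chain trajectory `x₀ * s` of `{x i ; t i}_{i = 0}^{K}`. -/
noncomputable def chainTraj {X : Type*} (φ : ℝ → X → X) (K : ℕ) (x : ℕ → X) (t : ℕ → ℝ)
    (s : ℝ) : X :=
  φ (s - finChainS t (segmentIndex t K s)) (x (segmentIndex t K s))

section ChainTraj

variable {X : Type*} {φ : ℝ → X → X} {K : ℕ} {x : ℕ → X} {t : ℕ → ℝ} {s : ℝ}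

lemma segmentIndex_le : segmentIndex t K s ≤ K := Nat.findGreatest_le K

lemma segmentIndex_mono {a b : ℝ} (hab : a ≤ b) : segmentIndex t K a ≤ segmentIndex t K b :=
  Nat.findGreatest_mono_left (fun _ h => h.trans hab) K

lemma mem_Ico_segmentIndex (hs : 0 ≤ s) (hsK : s < finChainS t (K + 1)) :
    s ∈ Ico (finChainS t (segmentIndex t K s)) (finChainS t (segmentIndex t K s + 1)) := by
  refine ⟨Nat.findGreatest_spec (P := fun i => finChainS t i ≤ s) (Nat.zero_le K)
    (by rwa [finChainS_zero]), ?_⟩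
  rcases segmentIndex_le.lt_or_eq with hlt | heq
  · exact not_le.1 (Nat.findGreatest_is_greatest (Nat.lt_succ_self _) hlt)
  · rwa [heq]

lemma segmentIndex_eq (ht : ∀ j < K, 0 ≤ t j) {i : ℕ} (hi : i ≤ K)
    (hs : s ∈ Ico (finChainS t i) (finChainS t (i + 1))) : segmentIndex t K s = i :=
  Nat.findGreatest_eq_iff.2 ⟨hi, fun _ => hs.1, fun _ hin hnK hn =>
    (hs.2.trans_le (finChainS_mono ht hin hnK)).not_ge hn⟩

lemma chainTraj_eq (ht : ∀ j < K, 0 ≤ t j) {i : ℕ} (hi : i ≤ K)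
    (hs : s ∈ Ico (finChainS t i) (finChainS t (i + 1))) :
    chainTraj φ K x t s = φ (s - finChainS t i) (x i) := by
  rw [chainTraj, segmentIndex_eq ht hi hs]

lemma chainTraj_mem {H : Set X} (hx : ∀ i ≤ K, x i ∈ H) (hinv : ∀ τ, φ τ '' H = H) :
    chainTraj φ K x t s ∈ H := by
  rw [chainTraj, ← hinv]
  exact mem_image_of_mem _ (hx _ segmentIndex_le)

end ChainTraj

lemma flow_sub_flow_sub {X : Type*} {φ : ℝ → X → X}
    (hadd : ∀ s t : ℝ, ∀ x : X, φ (s + t) x = φ s (φ t x)) (u v w : ℝ) (y : X) :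
    φ (u - v) (φ (v - w) y) = φ (u - w) y := by
  rw [← hadd, sub_add_sub_cancel]

section Flow

variable {φ : ℝ → M → M}

lemma exists_dist_flow_lt [CompactSpace M] (hcont : Continuous fun p : ℝ × M => φ p.1 p.2)
    (T₀ : ℝ) {η : ℝ} (hη : 0 < η) :
    ∃ α > 0, ∀ r ∈ Icc 0 T₀, ∀ p q : M, dist p q < α → dist (φ r p) (φ r q) < η := by
  have huc : UniformContinuous fun p : Icc 0 T₀ × M => φ p.1 p.2 :=
    CompactSpace.uniformContinuous_of_continuous
      (hcont.comp (continuous_subtype_val.prodMap continuous_id))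
  obtain ⟨α, hα, h⟩ := Metric.uniformContinuous_iff.1 huc η hη
  refine ⟨α, hα, fun r hr p q hpq => h (a := (⟨r, hr⟩, p)) (b := (⟨r, hr⟩, q)) ?_⟩
  simpa [Prod.dist_eq] using hpq

lemma exists_dist_flow_sub_le [CompactSpace M] (hcont : Continuous fun p : ℝ × M => φ p.1 p.2)
    (hzero : ∀ x : M, φ 0 x = x) (hadd : ∀ s t : ℝ, ∀ x : M, φ (s + t) x = φ s (φ t x))
    (T₀ : ℝ) (N : ℕ) {η : ℝ} (hη : 0 < η) :
    ∃ δ > 0, ∀ n ≤ N, ∀ (w : ℕ → M) (τ : ℕ → ℝ), (∀ i < n, τ (i + 1) - τ i ∈ Icc 0 T₀) →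
      (∀ i < n, dist (φ (τ (i + 1) - τ i) (w i)) (w (i + 1)) ≤ δ) →
      dist (φ (τ n - τ 0) (w 0)) (w n) ≤ η := by
  induction N generalizing η with
  | zero =>
    refine ⟨η, hη, fun n hn w τ _ _ => ?_⟩
    rw [Nat.le_zero.1 hn, sub_self, hzero, dist_self]
    exact hη.le
  | succ N ih =>
    obtain ⟨α, hα, hmod⟩ := exists_dist_flow_lt hcont T₀ (half_pos hη)
    obtain ⟨δ, hδ, hshort⟩ := ih (lt_min (half_pos hα) hη)
    refine ⟨min δ (η / 2), lt_min hδ (half_pos hη), fun n hn w τ hτ hw => ?_⟩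
    have hwδ : ∀ i < n, dist (φ (τ (i + 1) - τ i) (w i)) (w (i + 1)) ≤ δ :=
      fun i hi => (hw i hi).trans (min_le_left _ _)
    rcases hn.lt_or_eq with hn | rfl
    · exact (hshort n (Nat.lt_succ_iff.1 hn) w τ hτ hwδ).trans (min_le_right _ _)
    have hN := hshort N le_rfl w τ (fun i hi => hτ i (hi.trans N.lt_succ_self))
      fun i hi => hwδ i (hi.trans N.lt_succ_self)
    calc dist (φ (τ (N + 1) - τ 0) (w 0)) (w (N + 1))
        ≤ dist (φ (τ (N + 1) - τ N) (φ (τ N - τ 0) (w 0))) (φ (τ (N + 1) - τ N) (w N))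
          + dist (φ (τ (N + 1) - τ N) (w N)) (w (N + 1)) := by
          rw [flow_sub_flow_sub hadd]
          exact dist_triangle _ _ _
      _ ≤ η / 2 + η / 2 := by
          refine add_le_add (hmod _ (hτ N N.lt_succ_self) _ _ ?_).le
            ((hw N N.lt_succ_self).trans (min_le_right _ _))
          exact (hN.trans (min_le_left _ _)).trans_lt (half_lt_self hα)
      _ = η := add_halves η

lemma exists_dist_flow_chainTraj_lt [CompactSpace M]
    (hcont : Continuous fun p : ℝ × M => φ p.1 p.2) (hzero : ∀ x : M, φ 0 x = x)
    (hadd : ∀ s t : ℝ, ∀ x : M, φ (s + t) x = φ s (φ t x)) {T T₀ η : ℝ} (hT : 0 < T)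
    (hη : 0 < η) :
    ∃ δ > 0, ∀ (K : ℕ) (x : ℕ → M) (t : ℕ → ℝ), (∀ i ≤ K, T ≤ t i) →
      (∀ i < K, dist (φ (t i) (x i)) (x (i + 1)) ≤ δ) →
      ∀ a σ, 0 ≤ a → a ≤ σ → σ ≤ a + T₀ → σ < finChainS t (K + 1) →
      dist (φ (σ - a) (chainTraj φ K x t a)) (chainTraj φ K x t σ) < η := by
  obtain ⟨α, hα, hmod⟩ := exists_dist_flow_lt hcont T₀ hη
  obtain ⟨δ, hδ, hshort⟩ := exists_dist_flow_sub_le hcont hzero hadd T₀ ⌈T₀ / T⌉₊ (half_pos hα)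
  refine ⟨δ, hδ, fun K x t ht hjump a σ ha haσ hσa hσK => ?_⟩
  have ht0 : ∀ j < K + 1, 0 ≤ t j := fun j hj => hT.le.trans (ht j (by omega))
  set p := segmentIndex t K a
  set q := segmentIndex t K σ
  have hp := mem_Ico_segmentIndex ha (haσ.trans_lt hσK)
  have hq := mem_Ico_segmentIndex (ha.trans haσ) hσK
  have hpq : p ≤ q := segmentIndex_mono haσ
  have hqK : q ≤ K := segmentIndex_le
  -- A pseudo-orbit from `a` through the breakpoints `S (p + 1), …, S q` of the window.
  set τ : ℕ → ℝ := fun i => max a (finChainS t (p + i))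
  set w : ℕ → M := fun i => φ (τ i - finChainS t (p + i)) (x (p + i))
  have hτ : ∀ i, 1 ≤ i → p + i ≤ q → τ i = finChainS t (p + i) := fun i hi hiq =>
    max_eq_right (hp.2.le.trans (finChainS_mono ht0 (by omega) (by omega)))
  have hτσ : ∀ i, p + i ≤ q → τ i ≤ σ := fun i hiq =>
    max_le haσ ((finChainS_mono ht0 hiq (by omega)).trans hq.1)
  have hτ0 : τ 0 = a := max_eq_left hp.1
  have hclose := hshort (q - p) (sub_le_ceil_div_of_finChainS hT ht hqK hp.2 hq.1 hσa) w τ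
    (fun i hi => ⟨sub_nonneg.2 (max_le_max le_rfl (finChainS_mono ht0 (by omega) (by omega))),
      by linarith [hτσ (i + 1) (by omega), le_max_left a (finChainS t (p + i))]⟩)
    (fun i hi => by
      simp only [w, flow_sub_flow_sub hadd, hτ (i + 1) (by omega) (by omega), ← add_assoc,
        finChainS_succ, sub_self, hzero, add_sub_cancel_left]
      exact hjump (p + i) (by omega))
  simp only [w, hτ0, Nat.add_sub_cancel' hpq, add_zero] at hclose
  have hτq : τ (q - p) ∈ Icc a σ := ⟨le_max_left _ _, hτσ _ (by omega)⟩
  have := hmod (σ - τ (q - p)) ⟨by linarith [hτq.2], by linarith [hτq.1]⟩ _ _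
    (hclose.trans_lt (half_lt_self hα))
  simpa only [chainTraj, flow_sub_flow_sub hadd] using this

end Flow

lemma IsRepEps.mono {ε ε' : ℝ} {g : ℝ → ℝ} (hg : IsRepEps ε g) (h : ε ≤ ε') : IsRepEps ε' g :=
  ⟨hg.1, fun s t hst => (hg.2 s t hst).trans h⟩

def TracesFinChains (φ : ℝ → M → M) (H : Set M) (ε δ T : ℝ) : Prop :=
  ∀ k x t, IsFinChainDT φ H δ T k x t →
    ∃ z : M, ∃ g : ℝ → ℝ, IsRepEps ε g ∧ FinTracedVia φ ε k x t g z

section Tracing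

variable {φ : ℝ → M → M} {H : Set M}

/-- The tracing point is that of the `(δ₀, T₀)`-chain of samples `γ (j * T₀)`. -/
lemma TracesFinChains.exists_trace_of_window {ε δ₀ T₀ η L : ℝ}
    (htr : TracesFinChains φ H ε δ₀ T₀) (hT₀ : 0 < T₀) (hηδ : η ≤ δ₀) {γ : ℝ → M}
    (hγ : ∀ s, γ s ∈ H)
    (hwin : ∀ a σ, 0 ≤ a → a ≤ σ → σ ≤ a + T₀ → σ ≤ L → dist (φ (σ - a) (γ a)) (γ σ) ≤ η) :
    ∃ z : M, ∃ g : ℝ → ℝ, IsRepEps ε g ∧ ∀ s ∈ Icc 0 L, dist (γ s) (φ (g s) z) ≤ η + ε := by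
  set m := ⌊L / T₀⌋₊
  obtain ⟨z, g, hg, hzg, -⟩ := htr m (fun j => γ (j * T₀)) (fun _ => T₀)
    ⟨fun j _ => hγ _, fun _ _ => le_rfl, fun j hj => by
      have hjL : ((j + 1 : ℕ) : ℝ) * T₀ ≤ L :=
        (le_div_iff₀ hT₀).1 ((Nat.le_floor_iff' j.succ_ne_zero).1 hj)
      have hsucc : ((j + 1 : ℕ) : ℝ) * T₀ = j * T₀ + T₀ := by push_cast; ring
      dsimp only
      rw [hsucc] at hjL ⊢
      simpa only [add_sub_cancel_left] using
        (hwin (j * T₀) (j * T₀ + T₀) (by positivity) (by linarith) le_rfl hjL).trans hηδ⟩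
  refine ⟨z, g, hg, fun s hs => ?_⟩
  set j := ⌊s / T₀⌋₊
  have hjs : (j : ℝ) * T₀ ≤ s := (le_div_iff₀ hT₀).1 (Nat.floor_le (div_nonneg hs.1 hT₀.le))
  have hsj : s < (j + 1 : ℕ) * T₀ := by
    push_cast
    exact (div_lt_iff₀ hT₀).1 (Nat.lt_floor_add_one _)
  have hjm : j ≤ m := Nat.floor_le_floor (div_le_div_of_nonneg_right hs.2 hT₀.le)
  have htraced := hzg j hjm s (by rwa [finChainS_const]) (by rwa [finChainS_const])
  rw [finChainS_const] at htraced
  calc dist (γ s) (φ (g s) z)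
      ≤ dist (γ s) (φ (s - j * T₀) (γ (j * T₀)))
        + dist (φ (s - j * T₀) (γ (j * T₀))) (φ (g s) z) := dist_triangle _ _ _
    _ ≤ η + ε := by
        refine add_le_add ?_ htraced
        rw [dist_comm]
        exact hwin _ _ (by positivity) hjs (by push_cast at hsj; linarith) hs.2

lemma TracesFinChains.exists_of_half [CompactSpace M]
    (hcont : Continuous fun p : ℝ × M => φ p.1 p.2) (hzero : ∀ x : M, φ 0 x = x)
    (hadd : ∀ s t : ℝ, ∀ x : M, φ (s + t) x = φ s (φ t x))
    (hinv : ∀ τ : ℝ, φ τ '' H = H) {ε δ₀ T₀ T : ℝ} (hε : 0 < ε) (hδ₀ : 0 < δ₀) (hT₀ : 0 < T₀)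
    (hT : 0 < T) (htr : TracesFinChains φ H (ε / 2) δ₀ T₀) :
    ∃ δ > 0, TracesFinChains φ H ε δ T := by
  obtain ⟨δ, hδ, hwin⟩ := exists_dist_flow_chainTraj_lt hcont hzero hadd (T₀ := T₀) hT
    (lt_min hδ₀ (half_pos hε))
  refine ⟨δ, hδ, fun k x t ⟨hx, ht, hjump⟩ => ?_⟩
  -- Lengthening the last step by `T₀` puts the endpoint `S (k + 1)` inside the last segment.
  set t' := Function.update t k (t k + T₀)
  have htt' : t ≤ t' := le_update_iff.2 ⟨by linarith, fun _ _ => le_rfl⟩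
  have hS : ∀ i ≤ k, finChainS t' i = finChainS t i := fun i hi => finChainS_update_of_le k _ hi
  have hSk : finChainS t (k + 1) < finChainS t' (k + 1) := by
    rw [finChainS_update_succ, finChainS_succ]
    linarith
  have ht0 : ∀ j < k + 1, 0 ≤ t j := fun j hj => hT.le.trans (ht j (by omega))
  have ht'0 : ∀ j < k, 0 ≤ t' j := fun j hj => (ht0 j (by omega)).trans (htt' j)
  obtain ⟨z, g, hg, hclose⟩ := htr.exists_trace_of_window hT₀ (min_le_left _ _)
    (γ := chainTraj φ k x t') (fun _ => chainTraj_mem hx hinv) (L := finChainS t (k + 1))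
    fun a σ ha haσ hσa hσL => (hwin k x t' (fun i hi => (ht i hi).trans (htt' i))
      (fun i hi => by simpa [t', hi.ne] using hjump i hi) a σ ha haσ hσa (hσL.trans_lt hSk)).le
  have htraj : ∀ i ≤ k, ∀ s ∈ Ico (finChainS t i) (finChainS t' (i + 1)),
      s ≤ finChainS t (k + 1) → dist (φ (s - finChainS t i) (x i)) (φ (g s) z) ≤ ε := by
    intro i hi s hs hsk
    rw [← hS i hi, ← chainTraj_eq (φ := φ) (x := x) ht'0 hi (by rwa [hS i hi])]
    exact (hclose s ⟨(finChainS_nonneg fun j hj => ht0 j (by omega)).trans hs.1, hsk⟩).trans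
      (by linarith [min_le_right δ₀ (ε / 2)])
  refine ⟨z, g, hg.mono (half_le_self hε.le), fun i hi s hs hsi => ?_, ?_⟩
  · exact htraj i hi s ⟨hs, hsi.trans_le (finChainS_le_finChainS htt' _)⟩
      (hsi.le.trans (finChainS_mono ht0 (by omega) le_rfl))
  · simpa only [finChainS_succ t k, add_sub_cancel_left] using htraj k le_rfl
      (finChainS t (k + 1)) ⟨by linarith [finChainS_succ t k, ht0 k k.lt_succ_self], hSk⟩ le_rfl

end Tracing

theorem sfpotp_iff_uniform_in_T_general {M : Type*} [MetricSpace M] [CompactSpace M]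
    (φ : ℝ → M → M)
    (hflow_cont : Continuous fun p : ℝ × M => φ p.1 p.2)
    (hflow_zero : ∀ x : M, φ 0 x = x)
    (hflow_add : ∀ s t : ℝ, ∀ x : M, φ (s + t) x = φ s (φ t x))
    (H : Set M) (hHinv : ∀ τ : ℝ, φ τ '' H = H) :
    SFPOTP φ H ↔
      ∀ ε > (0 : ℝ), ∀ T > (0 : ℝ), ∃ δ > (0 : ℝ), ∀ k x t, IsFinChainDT φ H δ T k x t →
        ∃ z : M, ∃ g : ℝ → ℝ, IsRepEps ε g ∧ FinTracedVia φ ε k x t g z := by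
  constructor
  · intro hS ε hε T hT
    obtain ⟨δ₀, hδ₀, T₀, hT₀, htr⟩ := hS (ε / 2) (half_pos hε)
    exact TracesFinChains.exists_of_half hflow_cont hflow_zero hflow_add hHinv hε hδ₀ hT₀ hT htr
  · intro h ε hε
    obtain ⟨δ, hδ, htr⟩ := h ε hε 1 one_pos
    exact ⟨δ, hδ, 1, one_pos, htr⟩

theorem sfpotp_iff_uniform_in_T {M : Type*} [MetricSpace M] [CompactSpace M]
    (φ : ℝ → M → M)
    (hflow_cont : Continuous fun p : ℝ × M => φ p.1 p.2)
    (hflow_zero : ∀ x : M, φ 0 x = x)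
    (hflow_add : ∀ s t : ℝ, ∀ x : M, φ (s + t) x = φ s (φ t x))
    (H : Set M) (hHcomp : IsCompact H) (hHinv : ∀ τ : ℝ, φ τ '' H = H) :
    SFPOTP φ H ↔
      ∀ ε > (0 : ℝ), ∀ T > (0 : ℝ), ∃ δ > (0 : ℝ), ∀ k x t, IsFinChainDT φ H δ T k x t →
        ∃ z : M, ∃ g : ℝ → ℝ, IsRepEps ε g ∧ FinTracedVia φ ε k x t g z :=
  sfpotp_iff_uniform_in_T_general φ hflow_cont hflow_zero hflow_add H hHinv
end

section
/- Let M be a compact metric space, φ a continuous flow on M, and H ⊆ M a nonsingular compact invariant set (H contains no fixed point of φ). If H has the weak pseudo-orbit tracing property (WPOTP), then H has the strong pseudo-orbit tracing property (SPOTP). -/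
variable {M : Type*} [MetricSpace M]

/-!
Compactness and nonsingularity give `t0 > 0` such that no point of `H` has a period in
`(0, t0]`; quantitatively, for every `β > 0` a point `ρ`-close to `H` that comes back `ρ`-close
within a time `|u| ≤ t0` must have `|u| < β`. Let `z` weakly trace a chain via `g`. For `r ∈ [0, 1]`
the orbit points `φ (g s + r) z` and `φ (g (s + r)) z` both stay near the chain trajectory at time
`s + r`, so `u = g (s + r) - g s - r` is such a return time. It depends continuously on `r` and
vanishes at `r = 0`, so it cannot cross the gap `[β, t0]`: `|g (s + r) - g s - r| < β`. The average
`h s = ∫₀¹ (g (s + r) - g r) dr` then has `h' s = g (s + 1) - g s ∈ [1 - β, 1 + β]`, so `h` lies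
in `Rep(β)`, and `|h - g| ≤ 2β`, so `z` also traces the chain via `h`.
-/

open Set Filter Topology Function

lemma chainS_zero (t : ℤ → ℝ) : chainS t 0 = 0 := by simp [chainS]

lemma chainS_succ (t : ℤ → ℝ) (i : ℤ) : chainS t (i + 1) = chainS t i + t i := by
  rcases le_or_gt 0 i with hi | hi
  · rw [chainS, chainS, if_pos (by omega), if_pos hi, show (i + 1).toNat = i.toNat + 1 by omega,
      Finset.sum_range_succ, show ((i.toNat : ℕ) : ℤ) = i by omega]
  · obtain hi1 | hi' := eq_or_lt_of_le (show i + 1 ≤ 0 by omega)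
    · obtain rfl : i = -1 := by omega
      simp [chainS]
    · rw [chainS, chainS, if_neg (by omega), if_neg (by omega),
        show (-i).toNat = (-(i + 1)).toNat + 1 by omega, Finset.sum_range_succ,
        show -(((-(i + 1)).toNat : ℤ) + 1) = i by omega]
      ring

section ChainTimes

variable {t : ℤ → ℝ} {T : ℝ}

lemma chainS_monotone (ht : ∀ i, 0 ≤ t i) : Monotone (chainS t) :=
  monotone_int_of_le_succ fun i => by rw [chainS_succ]; linarith [ht i]

lemma le_chainS_sub (ht : ∀ i, T ≤ t i) {i j : ℤ} (hij : i ≤ j) :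
    T * (j - i) ≤ chainS t j - chainS t i := by
  induction j, hij using Int.leInduction with
  | base => simp
  | succ j _ ih =>
    rw [chainS_succ]
    push_cast
    linarith [ht j]

lemma exists_chainS_le_lt (hT : 0 < T) (ht : ∀ i, T ≤ t i) (s : ℝ) :
    ∃ i, chainS t i ≤ s ∧ s < chainS t (i + 1) := by
  set N := ⌈|s| / T⌉
  have hN : |s| ≤ T * N := by
    rw [← div_le_iff₀' hT]
    exact Int.le_ceil _
  have hbdd : ∀ i, chainS t i ≤ s → i ≤ N := by
    intro i hi
    by_contra! hNi
    have := le_chainS_sub ht (Int.ceil_nonneg (by positivity) |>.trans hNi.le)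
    rw [chainS_zero, Int.cast_zero, sub_zero, sub_zero] at this
    have : T * N < T * i := mul_lt_mul_of_pos_left (by exact_mod_cast hNi) hT
    linarith [le_abs_self s]
  have hne : chainS t (-N) ≤ s := by
    have := le_chainS_sub ht (neg_nonpos.2 (Int.ceil_nonneg (by positivity) : 0 ≤ N))
    rw [chainS_zero] at this
    push_cast at this
    linarith [neg_abs_le s]
  obtain ⟨i, hi, hmax⟩ := Int.exists_greatest_of_bdd ⟨N, hbdd⟩ ⟨_, hne⟩
  exact ⟨i, hi, lt_of_not_ge fun h => by linarith [hmax _ h]⟩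

end ChainTimes

namespace Flow

variable (ϕ : Flow ℝ M)

lemma periodic_of_map_eq {u : ℝ} {p : M} (h : ϕ u p = p) : Periodic (fun τ => ϕ τ p) u :=
  fun τ => by simp only [map_add, h]

lemma map_eq_of_tendsto_of_map_eq {p : ℕ → M} {u : ℕ → ℝ} {x : M}
    (hp : Tendsto p atTop (𝓝 x)) (hu : Tendsto u atTop (𝓝 0)) (hu0 : ∀ n, u n ≠ 0)
    (hper : ∀ n, ϕ (u n) (p n) = p n) (τ : ℝ) : ϕ τ x = x := by
  set r : ℕ → ℝ := fun n => Int.fract (τ / u n) * u n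
  have hr : Tendsto r atTop (𝓝 0) := by
    refine squeeze_zero_norm (fun n => ?_) (tendsto_zero_iff_norm_tendsto_zero.1 hu)
    rw [norm_mul, Real.norm_of_nonneg (Int.fract_nonneg _)]
    exact mul_le_of_le_one_left (norm_nonneg _) (Int.fract_lt_one _).le
  have hpr : ∀ n, ϕ τ (p n) = ϕ (r n) (p n) := fun n => by
    rw [← (ϕ.periodic_of_map_eq (hper n)).sub_int_mul_eq (x := τ) ⌊τ / u n⌋]
    simp only [r, ← Int.self_sub_floor, sub_mul, div_mul_cancel₀ _ (hu0 n)]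
  have hlim : Tendsto (fun n => ϕ (r n) (p n)) atTop (𝓝 (ϕ 0 x)) :=
    (ϕ.cont'.tendsto (0, x)).comp (hr.prodMk_nhds hp)
  rw [ϕ.map_zero_apply, ← funext hpr] at hlim
  exact tendsto_nhds_unique (((ϕ.continuous_toFun τ).tendsto x).comp hp) hlim

lemma exists_pos_forall_map_ne {H : Set M} (hH : IsCompact H)
    (hfix : ∀ p ∈ H, ¬ ∀ τ, ϕ τ p = p) :
    ∃ t0 > 0, ∀ p ∈ H, ∀ u ≠ 0, |u| ≤ t0 → ϕ u p ≠ p := by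
  by_contra! hsmall
  choose p hpH u hu0 hu hper using fun n : ℕ => hsmall (1 / (n + 1)) Nat.one_div_pos_of_nat
  obtain ⟨x, hxH, σ, hσ, hpx⟩ := hH.tendsto_subseq hpH
  have hu_lim : Tendsto (u ∘ σ) atTop (𝓝 0) :=
    (squeeze_zero_norm hu tendsto_one_div_add_atTop_nhds_zero_nat).comp hσ.tendsto_atTop
  exact hfix x hxH (ϕ.map_eq_of_tendsto_of_map_eq hpx hu_lim (fun _ => hu0 _) fun _ => hper _)

variable [CompactSpace M]

lemma uniformContinuousOn_Icc_prod_univ (C : ℝ) :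
    UniformContinuousOn (uncurry ϕ) (Icc (-C) C ×ˢ univ) :=
  (isCompact_Icc.prod isCompact_univ).uniformContinuousOn_of_continuous ϕ.cont'.continuousOn

lemma exists_dist_map_le_of_dist_le (C : ℝ) {ε : ℝ} (hε : 0 < ε) :
    ∃ δ > 0, ∀ u, |u| ≤ C → ∀ p q, dist p q ≤ δ → dist (ϕ u p) (ϕ u q) ≤ ε := by
  obtain ⟨δ, hδ, h⟩ :=
    Metric.uniformContinuousOn_iff_le.1 (ϕ.uniformContinuousOn_Icc_prod_univ C) ε hε
  refine ⟨δ, hδ, fun u hu p q hpq =>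
    h (u, p) ⟨abs_le.1 hu, trivial⟩ (u, q) ⟨abs_le.1 hu, trivial⟩ ?_⟩
  simpa [Prod.dist_eq] using hpq

lemma exists_dist_map_le_of_abs_sub_le {ε : ℝ} (hε : 0 < ε) :
    ∃ a > 0, ∀ u v, |u - v| ≤ a → ∀ p, dist (ϕ u p) (ϕ v p) ≤ ε := by
  obtain ⟨δ, hδ, h⟩ :=
    Metric.uniformContinuousOn_iff_le.1 (ϕ.uniformContinuousOn_Icc_prod_univ 1) ε hε
  refine ⟨min δ 1, by positivity, fun u v huv p => ?_⟩
  have huv1 : |u - v| ≤ 1 := huv.trans (min_le_right _ _)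
  have := h (u - v, ϕ v p) ⟨abs_le.1 huv1, trivial⟩ (0, ϕ v p) ⟨by norm_num, trivial⟩
    (by simpa [Prod.dist_eq, Real.dist_eq] using huv.trans (min_le_left _ _))
  simpa [← ϕ.map_add] using this

lemma exists_abs_lt_of_dist_le {H : Set M} (hH : IsCompact H)
    (hfix : ∀ p ∈ H, ¬ ∀ τ, ϕ τ p = p) :
    ∃ t0 > 0, ∀ β > 0, ∃ ρ > 0, ∀ p ∈ H, ∀ q u, |u| ≤ t0 → dist q p ≤ ρ →
      dist (ϕ u q) p ≤ ρ → |u| < β := by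
  obtain ⟨t0, ht0, hne⟩ := ϕ.exists_pos_forall_map_ne hH hfix
  refine ⟨t0, ht0, fun β hβ => ?_⟩
  have hK : IsCompact ((Icc (-t0) t0 ∩ {u | β ≤ |u|}) ×ˢ H) :=
    (isCompact_Icc.inter_right (isClosed_le continuous_const continuous_abs)).prod hH
  obtain ⟨e, he, hKe⟩ := hK.exists_forall_le' (ϕ.cont'.dist continuous_snd).continuousOn
    fun y hy => dist_pos.2 <| hne _ hy.2 _
      (abs_pos.1 (hβ.trans_le hy.1.2)) (abs_le.2 hy.1.1)
  obtain ⟨δ, hδ, hUC⟩ := ϕ.exists_dist_map_le_of_dist_le t0 (by positivity : 0 < e / 3)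
  refine ⟨min δ (e / 3), by positivity, fun p hp q u hu hqp huqp => lt_of_not_ge fun hβu => ?_⟩
  have hup : e ≤ dist (ϕ u p) p := hKe (u, p) ⟨⟨abs_le.1 hu, hβu⟩, hp⟩
  have hpq := hUC u hu p q (by rw [dist_comm]; exact hqp.trans (min_le_left _ _))
  linarith [dist_triangle (ϕ u p) (ϕ u q) p, huqp.trans (min_le_right _ _)]

end Flow

lemma forall_lt_of_forall_le_imp_lt {f : ℝ → ℝ} {a β t0 : ℝ} (hf : ContinuousOn f (Icc 0 a))
    (h0 : f 0 < β) (hβ : β ≤ t0) (hgap : ∀ r ∈ Icc 0 a, f r ≤ t0 → f r < β) :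
    ∀ r ∈ Icc 0 a, f r < β := by
  intro r hr
  by_contra! hβr
  obtain ⟨r', hr', hr'β⟩ := intermediate_value_Icc hr.1 (hf.mono (Icc_subset_Icc_right hr.2))
    ⟨h0.le, hβr⟩
  have := hgap r' (Icc_subset_Icc_right hr.2 hr') (hr'β.trans_le hβ)
  exact this.ne hr'β

lemma IsRepEps.mono_s11 {m ε : ℝ} {h : ℝ → ℝ} (hh : IsRepEps m h) (hmε : m ≤ ε) : IsRepEps ε h :=
  ⟨hh.1, fun s u hsu => (hh.2 s u hsu).trans hmε⟩

lemma isRepEps_of_abs_sub_sub_le {h : ℝ → ℝ} {m : ℝ} (hm : m < 1) (h0 : h 0 = 0)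
    (hh : ∀ s u, |h s - h u - (s - u)| ≤ m * |s - u|) : IsRepEps m h := by
  have hlower : ∀ s u, s ≤ u → (1 - m) * (u - s) ≤ h u - h s := fun s u hsu => by
    have := (abs_le.1 (hh u s)).1
    rw [abs_of_nonneg (sub_nonneg.2 hsu)] at this
    linarith
  have hcont : Continuous h := by
    refine (LipschitzWith.of_dist_le_mul fun s u => ?_ : LipschitzWith 2 h).continuous
    rw [Real.dist_eq, Real.dist_eq, NNReal.coe_ofNat]
    linarith [abs_sub_abs_le_abs_sub (h s - h u) (s - u), hh s u,
      mul_le_of_le_one_left (abs_nonneg (s - u)) hm.le]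
  have hmono : StrictMono h := fun s u hsu =>
    sub_pos.1 <| (mul_pos (sub_pos.2 hm) (sub_pos.2 hsu)).trans_le (hlower s u hsu.le)
  refine ⟨⟨⟨hcont, hmono, h0⟩, hcont.surjective ?_ ?_⟩, fun s u hsu => ?_⟩
  · refine tendsto_atTop_mono' _ ?_ (tendsto_id.const_mul_atTop (sub_pos.2 hm))
    filter_upwards [eventually_ge_atTop 0] with s hs
    simpa [h0] using hlower 0 s hs
  · refine tendsto_atBot_mono' _ ?_ (tendsto_id.const_mul_atBot (sub_pos.2 hm))
    filter_upwards [eventually_le_atBot 0] with s hs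
    simpa [h0] using hlower s 0 hs
  · have hsu' : (s - u) ≠ 0 := sub_ne_zero.2 hsu
    rw [div_sub_one hsu', abs_div, div_le_iff₀ (abs_pos.2 hsu')]
    exact hh s u

lemma exists_isRepEps_abs_sub_le {g : ℝ → ℝ} (hg : Continuous g) (hg0 : g 0 = 0) {β : ℝ}
    (hβ : β < 1) (hinc : ∀ s, ∀ r ∈ Icc (0 : ℝ) 1, |g (s + r) - g s - r| ≤ β) :
    ∃ h, IsRepEps β h ∧ ∀ s, |h s - g s| ≤ 2 * β := by
  set F : ℝ → ℝ := fun u => ∫ v in (0 : ℝ)..u, g v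
  have hF : ∀ s, ∫ r in (0 : ℝ)..1, g (s + r) = F (s + 1) - F s := fun s => by
    rw [intervalIntegral.integral_comp_add_left, add_zero,
      intervalIntegral.integral_interval_sub_left (hg.intervalIntegrable _ _)
        (hg.intervalIntegrable _ _)]
  refine ⟨fun s => F (s + 1) - F s - F 1, isRepEps_of_abs_sub_sub_le hβ (by simp [F]) ?_,
    fun s => ?_⟩
  · have hderiv : ∀ s, HasDerivAt (fun s => F (s + 1) - F s - F 1 - s)
        (g (s + 1) - g s - 1) s := fun s =>
      ((((hg.integral_hasStrictDerivAt 0 (s + 1)).hasDerivAt.comp_add_const s 1).sub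
        (hg.integral_hasStrictDerivAt 0 s).hasDerivAt).sub_const _).sub (hasDerivAt_id s)
    intro s u
    have := convex_univ.norm_image_sub_le_of_norm_hasDerivWithin_le
      (fun x _ => (hderiv x).hasDerivWithinAt) (fun x _ => hinc x 1 ⟨zero_le_one, le_rfl⟩)
      (mem_univ u) (mem_univ s)
    simp only [Real.norm_eq_abs] at this
    convert this using 2
    ring
  · have key : ∫ r in (0 : ℝ)..1, ((g (s + r) - g s - r) - (g (0 + r) - g 0 - r)) =
        F (s + 1) - F s - F 1 - g s := by
      simp only [zero_add, hg0, sub_zero, sub_sub_sub_cancel_right]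
      rw [intervalIntegral.integral_sub (Continuous.intervalIntegrable (by fun_prop) _ _)
        (hg.intervalIntegrable _ _), intervalIntegral.integral_sub
        (Continuous.intervalIntegrable (by fun_prop) _ _) intervalIntegrable_const, hF,
        intervalIntegral.integral_const, sub_zero, one_smul]
      ring
    rw [← key]
    have := intervalIntegral.norm_integral_le_of_norm_le_const (a := 0) (b := 1) (C := 2 * β)
      (f := fun r => (g (s + r) - g s - r) - (g (0 + r) - g 0 - r)) fun r hr => by
        have hr' : r ∈ Icc (0 : ℝ) 1 := Ioc_subset_Icc_self (by simpa using hr)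
        exact (abs_sub _ _).trans (by linarith [hinc s r hr', hinc 0 r hr'])
    simpa using this

lemma IsChainDT.mono_s11 {φ : ℝ → M → M} {H : Set M} {δ δ' T T' : ℝ} {x : ℤ → M} {t : ℤ → ℝ}
    (h : IsChainDT φ H δ T x t) (hδ : δ ≤ δ') (hT : T' ≤ T) : IsChainDT φ H δ' T' x t :=
  ⟨h.1, fun i => hT.trans (h.2.1 i), fun i => (h.2.2 i).trans hδ⟩

lemma TracedVia.of_dist_le {φ : ℝ → M → M} {ε₁ ε₂ ε : ℝ} {x : ℤ → M} {t : ℤ → ℝ}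
    {g h : ℝ → ℝ} {z : M} (htr : TracedVia φ ε₁ x t g z)
    (hgh : ∀ s, dist (φ (g s) z) (φ (h s) z) ≤ ε₂) (hε : ε₁ + ε₂ ≤ ε) : TracedVia φ ε x t h z :=
  fun i s hs hs' => (dist_triangle _ _ _).trans ((add_le_add (htr i s hs hs') (hgh s)).trans hε)

/-- Over a time span `r ≤ T` the chain trajectory makes at most one jump, of size at most `δ`. -/
lemma IsChainDT.exists_dist_le_map_eq {ϕ : Flow ℝ M} {H : Set M} {δ T : ℝ} {x : ℤ → M}
    {t : ℤ → ℝ} (hchain : IsChainDT ϕ H δ T x t) {i j : ℤ} {s r : ℝ} (hr : r ∈ Icc 0 T)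
    (hi : chainS t i ≤ s) (hi' : s < chainS t (i + 1))
    (hj : chainS t j ≤ s + r) (hj' : s + r < chainS t (j + 1)) :
    ∃ τ ∈ Icc 0 r, ∃ p q, dist p q ≤ δ ∧ ϕ (s + r - chainS t j) (x j) = ϕ τ p ∧
      ϕ r (ϕ (s - chainS t i) (x i)) = ϕ τ q := by
  obtain ⟨-, ht, hδ⟩ := hchain
  have hmono := chainS_monotone fun k => hr.1.trans (hr.2.trans (ht k))
  have hij : i ≤ j := by
    by_contra! h
    linarith [hmono (show j + 1 ≤ i by omega), hr.1]
  have hji : j ≤ i + 1 := by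
    by_contra! h
    have := hmono (show i + 1 + 1 ≤ j by omega)
    rw [chainS_succ t (i + 1)] at this
    linarith [ht (i + 1), hr.2]
  obtain rfl | rfl : j = i ∨ j = i + 1 := by omega
  · refine ⟨r, ⟨hr.1, le_rfl⟩, _, _, (dist_self _).trans_le (dist_nonneg.trans (hδ 0)), ?_, rfl⟩
    rw [← ϕ.map_add, add_sub_right_comm, add_comm]
  · refine ⟨s + r - chainS t (i + 1), ⟨by linarith, by linarith⟩, x (i + 1), ϕ (t i) (x i),
      by rw [dist_comm]; exact hδ i, rfl, ?_⟩
    rw [← ϕ.map_add, ← ϕ.map_add, chainS_succ]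
    ring_nf

/-- The witnesses are the chain trajectory `p` at time `s + r` and `q = ϕ (g s + r) z`. -/
lemma TracedVia.exists_near_return {ϕ : Flow ℝ M} {H : Set M} (hH : IsInvariant ϕ H)
    {δ T η ρ ε' : ℝ} {x : ℤ → M} {t : ℤ → ℝ} {g : ℝ → ℝ} {z : M}
    (hUC : ∀ u, |u| ≤ 1 → ∀ p q, dist p q ≤ η → dist (ϕ u p) (ϕ u q) ≤ ρ / 2)
    (hchain : IsChainDT ϕ H δ T x t) (hT : 1 ≤ T) (hδη : δ ≤ η)
    (htr : TracedVia ϕ ε' x t g z) (hε'η : ε' ≤ η) (hε'ρ : ε' ≤ ρ) (s : ℝ) {r : ℝ}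
    (hr : r ∈ Icc (0 : ℝ) 1) :
    ∃ p ∈ H, ∃ q, dist q p ≤ ρ ∧ dist (ϕ (g (s + r) - g s - r) q) p ≤ ρ := by
  obtain ⟨i, hi, hi'⟩ := exists_chainS_le_lt (one_pos.trans_le hT) hchain.2.1 s
  obtain ⟨j, hj, hj'⟩ := exists_chainS_le_lt (one_pos.trans_le hT) hchain.2.1 (s + r)
  obtain ⟨τ, hτ, p', q', hpq', hp', hq'⟩ :=
    hchain.exists_dist_le_map_eq ⟨hr.1, hr.2.trans hT⟩ hi hi' hj hj'
  have hτ1 : |τ| ≤ 1 := abs_le.2 ⟨by linarith [hτ.1], hτ.2.trans hr.2⟩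
  refine ⟨_, hH (s + r - chainS t j) (hchain.1 j), ϕ r (ϕ (g s) z), ?_, ?_⟩
  · calc dist (ϕ r (ϕ (g s) z)) (ϕ (s + r - chainS t j) (x j))
        ≤ dist (ϕ r (ϕ (g s) z)) (ϕ r (ϕ (s - chainS t i) (x i))) +
          dist (ϕ r (ϕ (s - chainS t i) (x i))) (ϕ (s + r - chainS t j) (x j)) :=
          dist_triangle _ _ _
      _ ≤ ρ / 2 + ρ / 2 := by
          gcongr
          · exact hUC r (abs_le.2 ⟨by linarith [hr.1], hr.2⟩) _ _
              (by rw [dist_comm]; exact (htr i s hi hi').trans hε'η)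
          · rw [hp', hq']
            exact hUC τ hτ1 _ _ (by rw [dist_comm]; exact hpq'.trans hδη)
      _ = ρ := add_halves ρ
  · rw [← ϕ.map_add, ← ϕ.map_add, sub_add_cancel, sub_add_cancel, dist_comm]
    exact (htr j (s + r) hj hj').trans hε'ρ

lemma TracedVia.abs_sub_sub_lt {ϕ : Flow ℝ M} {H : Set M} (hH : IsInvariant ϕ H)
    {t0 β δ T η ρ ε' : ℝ} {x : ℤ → M} {t : ℤ → ℝ} {g : ℝ → ℝ} {z : M}
    (hret : ∀ p ∈ H, ∀ q u, |u| ≤ t0 → dist q p ≤ ρ → dist (ϕ u q) p ≤ ρ → |u| < β)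
    (hβ : 0 < β) (hβt0 : β ≤ t0)
    (hUC : ∀ u, |u| ≤ 1 → ∀ p q, dist p q ≤ η → dist (ϕ u p) (ϕ u q) ≤ ρ / 2)
    (hchain : IsChainDT ϕ H δ T x t) (hT : 1 ≤ T) (hδη : δ ≤ η)
    (htr : TracedVia ϕ ε' x t g z) (hε'η : ε' ≤ η) (hε'ρ : ε' ≤ ρ) (hg : Continuous g) (s : ℝ) :
    ∀ r ∈ Icc (0 : ℝ) 1, |g (s + r) - g s - r| < β :=
  forall_lt_of_forall_le_imp_lt (by fun_prop) (by simpa using hβ) hβt0 fun r hr hu => by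
    obtain ⟨p, hp, q, hqp, hupq⟩ := htr.exists_near_return hH hUC hchain hT hδη hε'η hε'ρ s hr
    exact hret p hp q _ hu hqp hupq

theorem nonsingular_wpotp_implies_spotp {M : Type*} [MetricSpace M] [CompactSpace M]
    (φ : ℝ → M → M)
    (hflow_cont : Continuous fun p : ℝ × M => φ p.1 p.2)
    (hflow_zero : ∀ x : M, φ 0 x = x)
    (hflow_add : ∀ s t : ℝ, ∀ x : M, φ (s + t) x = φ s (φ t x))
    (H : Set M) (hHcomp : IsCompact H) (hHinv : ∀ τ : ℝ, φ τ '' H = H)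
    (hHnonsing : ∀ p ∈ H, ¬ ∀ τ : ℝ, φ τ p = p)
    (hW : WPOTP φ H) : SPOTP φ H := by
  let ϕ : Flow ℝ M := ⟨φ, hflow_cont, hflow_add, hflow_zero⟩
  have hHϕ : IsInvariant ϕ H := (ϕ.isInvariant_iff_image_eq H).2 hHinv
  change WPOTP ϕ H at hW
  change SPOTP ϕ H
  intro ε hε
  obtain ⟨t0, ht0, hret⟩ := ϕ.exists_abs_lt_of_dist_le hHcomp hHnonsing
  obtain ⟨a, ha, hsmall⟩ := ϕ.exists_dist_map_le_of_abs_sub_le (half_pos hε)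
  set β := min (min (ε / 2) (a / 2)) (min t0 (1 / 2))
  have hβε : β ≤ ε / 2 := (min_le_left _ _).trans (min_le_left _ _)
  have hβa : β ≤ a / 2 := (min_le_left _ _).trans (min_le_right _ _)
  have hβt0 : β ≤ t0 := (min_le_right _ _).trans (min_le_left _ _)
  have hβ1 : β < 1 := ((min_le_right _ _).trans (min_le_right _ _)).trans_lt one_half_lt_one
  obtain ⟨ρ, hρ, hretβ⟩ := hret β (by positivity)
  obtain ⟨η, hη, hUC⟩ := ϕ.exists_dist_map_le_of_dist_le 1 (half_pos hρ)
  set ε' := min (ε / 2) (min η ρ)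
  obtain ⟨δ, hδ, T, hT, hWP⟩ := hW ε' (by positivity)
  refine ⟨min δ η, by positivity, max T 1, by positivity, fun x t hchain => ?_⟩
  obtain ⟨z, g, ⟨hg, -, hg0⟩, htr⟩ :=
    hWP x t (hchain.mono_s11 (min_le_left _ _) (le_max_left _ _))
  have hinc := htr.abs_sub_sub_lt hHϕ hretβ (by positivity) hβt0 hUC hchain (le_max_right _ _)
    (min_le_right _ _) ((min_le_right _ _).trans (min_le_left _ _))
    ((min_le_right _ _).trans (min_le_right _ _)) hg
  obtain ⟨h, hh, hhg⟩ := exists_isRepEps_abs_sub_le hg hg0 hβ1 fun s r hr => (hinc s r hr).le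
  refine ⟨z, h, hh.mono_s11 (hβε.trans (half_le_self hε.le)),
    htr.of_dist_le (fun s => hsmall _ _ ?_ z) (by linarith [min_le_left (ε / 2) (min η ρ)])⟩
  rw [abs_sub_comm]
  linarith [hhg s]
end
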